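/- For positive numbers a ≠ b and a positive integer n, the inequality (-1)^n·(ψ^(n-1)(a) - ψ^(n-1)(b))/(a-b) ≤ (-1)^n·ψ^(n)(I(a,b)) holds, where I(a,b) is the identric mean. -/

import Mathlib

open Real Filter Topology Set

noncomputable def Spow (p : ℕ) (t : ℝ) : ℝ := ∑' k : ℕ, ((t + k) ^ p)⁻¹

lemma add_nat_pos {t : ℝ} (ht : 0 < t) (k : ℕ) : 0 < t + k := by positivity

lemma min_mul_le_add {t : ℝ} (ht : 0 < t) (k : ℕ) : min t 1 * (1 + k) ≤ t + k := by
  rcases le_total t 1 with h | h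
  · rw [min_eq_left h]
    have : t * (1 + k) = t + t * k := by ring
    rw [this]
    have : t * k ≤ 1 * k := by
      apply mul_le_mul_of_nonneg_right h (by positivity)
    nlinarith [Nat.cast_nonneg (α := ℝ) k]
  · rw [min_eq_right h]
    nlinarith [Nat.cast_nonneg (α := ℝ) k]

lemma summable_spow {p : ℕ} (hp : 2 ≤ p) {t : ℝ} (ht : 0 < t) :
    Summable (fun k : ℕ => ((t + k) ^ p)⁻¹) := by
  have hm : 0 < min t 1 := lt_min ht one_pos
  have hsum : Summable (fun k : ℕ => ((min t 1) ^ p)⁻¹ * (((1 : ℝ) + k) ^ 2)⁻¹) := by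
    apply Summable.mul_left
    have : Summable (fun k : ℕ => (((k : ℝ) + 1) ^ 2)⁻¹) := by
      have := Real.summable_one_div_nat_rpow (p := 2)
      simpa using (summable_nat_add_iff (f := fun k : ℕ => (((k : ℝ)) ^ 2)⁻¹) 1).2
        (by simpa [one_div] using (summable_one_div_nat_pow (p := 2)).2 le_rfl)
    refine this.congr (fun k => ?_)
    push_cast; ring_nf
  apply Summable.of_nonneg_of_le (fun k => by positivity) (fun k => ?_) hsum
  have h1 : min t 1 * (1 + k) ≤ t + k := min_mul_le_add ht k
  have h2 : 0 < min t 1 * (1 + k) := by positivity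
  have h3 : (min t 1 * (1 + k)) ^ p ≤ (t + k) ^ p := pow_le_pow_left₀ h2.le h1 p
  have h4 : ((t + k) ^ p)⁻¹ ≤ ((min t 1 * (1 + k)) ^ p)⁻¹ := by
    apply inv_anti₀ (by positivity) h3
  refine h4.trans ?_
  rw [mul_pow, mul_inv]
  have h5 : (((1:ℝ) + k) ^ p)⁻¹ ≤ (((1:ℝ) + k) ^ 2)⁻¹ := by
    apply inv_anti₀ (by positivity)
    exact pow_le_pow_right₀ (by simp [Nat.cast_nonneg]) hp
  have h6 : (0:ℝ) ≤ ((min t 1) ^ p)⁻¹ := by positivity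
  exact mul_le_mul_of_nonneg_left h5 h6

lemma spow_pos {p : ℕ} (hp : 2 ≤ p) {t : ℝ} (ht : 0 < t) : 0 < Spow p t := by
  have := summable_spow hp ht
  refine Summable.tsum_pos this (fun k => by positivity) 0 ?_
  simp only [Nat.cast_zero, add_zero]
  positivity

lemma hasDerivAt_term (p : ℕ) (hp : 1 ≤ p) (k : ℕ) {x : ℝ} (hx : 0 < x + k) :
    HasDerivAt (fun y : ℝ => ((y + k) ^ p)⁻¹) (-(p : ℝ) * ((x + k) ^ (p + 1))⁻¹) x := by
  have h1 : HasDerivAt (fun y : ℝ => y + k) 1 x := (hasDerivAt_id x).add_const _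
  have h2 : HasDerivAt (fun y : ℝ => (y + k) ^ p) ((p : ℝ) * (x + k) ^ (p - 1) * 1) x := h1.pow p
  have h3 := h2.inv (by positivity)
  refine h3.congr_deriv ?_
  have hne : (x + k) ≠ 0 := ne_of_gt hx
  rw [mul_one]
  have key : ((x+(k:ℝ))^p)^2 = (x+k)^(p+1) * (x+k)^(p-1) := by
    rw [← pow_mul, ← pow_add]; congr 1; omega
  rw [key]
  have h5 : ((x+(k:ℝ))^(p+1)) ≠ 0 := by positivity
  have h6 : ((x+(k:ℝ))^(p-1)) ≠ 0 := by positivity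
  field_simp

lemma hasDerivAt_Spow {p : ℕ} (hp : 2 ≤ p) {x : ℝ} (hx : 0 < x) :
    HasDerivAt (Spow p) (-(p : ℝ) * Spow (p + 1) x) x := by
  have hsub : ∀ y : ℝ, y ∈ Ioi (x / 2) → ∀ k : ℕ, 0 < y + k := by
    intro y hy k
    have : 0 < y := lt_trans (by positivity) hy
    positivity
  have key := hasDerivAt_tsum_of_isPreconnected
    (u := fun k : ℕ => (p : ℝ) * ((x / 2 + k) ^ (p + 1))⁻¹)
    (t := Ioi (x / 2))
    (g := fun k : ℕ => fun y : ℝ => ((y + k) ^ p)⁻¹)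
    (g' := fun k : ℕ => fun y : ℝ => -(p : ℝ) * ((y + k) ^ (p + 1))⁻¹)
    (y₀ := x) (y := x)
    ((summable_spow (p := p + 1) (by omega) (by positivity)).mul_left _)
    isOpen_Ioi (isPreconnected_Ioi)
    (fun k y hy => hasDerivAt_term p (by omega) k (hsub y hy k))
    (fun k y hy => ?_)
    (by simp; positivity) (summable_spow hp hx) (by simp; positivity)
  · have : (∑' k : ℕ, -(p:ℝ) * ((x + k) ^ (p+1))⁻¹) = -(p:ℝ) * Spow (p+1) x := by
      rw [Spow, tsum_mul_left]
    rw [this] at key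
    exact key.congr_deriv rfl |>.congr_of_eventuallyEq (by
      filter_upwards [] with z
      rfl)
  · -- norm bound
    have hy0 : 0 < y := lt_trans (by positivity) hy
    have h1 : x / 2 + k ≤ y + k := by
      have : x / 2 < y := hy
      linarith
    have h2 : (0:ℝ) < x / 2 + k := by positivity
    rw [norm_mul, norm_neg, norm_inv]
    simp only [Real.norm_natCast, norm_pow, Real.norm_eq_abs]
    rw [abs_of_pos (hsub y hy k)]
    have hgoal : ((y + (k:ℝ)) ^ (p+1))⁻¹ ≤ ((x / 2 + k) ^ (p+1))⁻¹ :=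
      inv_anti₀ (by positivity) (pow_le_pow_left₀ h2.le h1 _)
    calc |(p:ℝ)| * ((y + k) ^ (p+1))⁻¹ = (p:ℝ) * ((y + k) ^ (p+1))⁻¹ := by
          rw [abs_of_nonneg (by positivity)]
      _ ≤ (p:ℝ) * ((x / 2 + k) ^ (p+1))⁻¹ := by
          apply mul_le_mul_of_nonneg_left hgoal (by positivity)

lemma pow_sub_pow_le_mul {A B : ℝ} (hA : 0 ≤ A) (hAB : A ≤ B) (m : ℕ) :
    B ^ m - A ^ m ≤ m * B ^ (m - 1) * (B - A) := by
  have hB : 0 ≤ B := hA.trans hAB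
  rw [← geom_sum₂_mul]
  apply mul_le_mul_of_nonneg_right _ (sub_nonneg.2 hAB)
  calc ∑ i ∈ Finset.range m, B ^ i * A ^ (m - 1 - i)
      ≤ ∑ i ∈ Finset.range m, B ^ (m - 1) := by
        apply Finset.sum_le_sum
        intro i hi
        rw [Finset.mem_range] at hi
        calc B ^ i * A ^ (m - 1 - i) ≤ B ^ i * B ^ (m - 1 - i) := by
              apply mul_le_mul_of_nonneg_left (pow_le_pow_left₀ hA hAB _) (by positivity)
          _ = B ^ (m - 1) := by rw [← pow_add]; congr 1; omega
    _ = m * B ^ (m - 1) := by rw [Finset.sum_const, Finset.card_range, nsmul_eq_mul]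

lemma mul_le_pow_sub_pow {A B : ℝ} (hA : 0 ≤ A) (hAB : A ≤ B) (m : ℕ) :
    (m : ℝ) * A ^ (m - 1) * (B - A) ≤ B ^ m - A ^ m := by
  rw [← geom_sum₂_mul]
  apply mul_le_mul_of_nonneg_right _ (sub_nonneg.2 hAB)
  calc (m : ℝ) * A ^ (m - 1) = ∑ _i ∈ Finset.range m, A ^ (m - 1) := by
        rw [Finset.sum_const, Finset.card_range, nsmul_eq_mul]
    _ ≤ ∑ i ∈ Finset.range m, B ^ i * A ^ (m - 1 - i) := by
        apply Finset.sum_le_sum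
        intro i hi
        rw [Finset.mem_range] at hi
        calc A ^ (m - 1) = A ^ i * A ^ (m - 1 - i) := by rw [← pow_add]; congr 1; omega
          _ ≤ B ^ i * A ^ (m - 1 - i) := by
              apply mul_le_mul_of_nonneg_right (pow_le_pow_left₀ hA hAB _) (by positivity)

lemma tsum_sub_succ {c : ℕ → ℝ} (hmono : ∀ k, c (k + 1) ≤ c k) (hc : Tendsto c atTop (𝓝 0)) :
    ∑' k : ℕ, (c k - c (k + 1)) = c 0 := by
  have hanti : Antitone c := antitone_nat_of_succ_le hmono
  have hpos : ∀ n, 0 ≤ c n := by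
    intro n
    apply le_of_tendsto hc
    filter_upwards [eventually_ge_atTop n] with m hm
    exact hanti hm
  have hb : ∀ n, ∑ i ∈ Finset.range n, (c i - c (i + 1)) = c 0 - c n :=
    fun n => Finset.sum_range_sub' c n
  have hsum : Summable fun k => c k - c (k + 1) := by
    refine summable_of_sum_range_le (c := c 0) (fun k => sub_nonneg.2 (hmono k)) (fun n => ?_)
    rw [hb]
    linarith [hpos n]
  have h1 := hsum.hasSum.tendsto_sum_nat
  have h2 : Tendsto (fun n => c 0 - c n) atTop (𝓝 (c 0)) := by
    simpa using tendsto_const_nhds.sub hc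
  exact tendsto_nhds_unique h1 (h2.congr (fun n => (hb n).symm))

lemma tendsto_cpow_inv {m : ℕ} (hm : 1 ≤ m) {s : ℝ} (hs : 0 < s) :
    Tendsto (fun k : ℕ => ((s + k) ^ m)⁻¹) atTop (𝓝 0) := by
  apply Tendsto.inv_tendsto_atTop
  apply Tendsto.comp (tendsto_pow_atTop (by omega))
  exact tendsto_atTop_add_const_left _ _ (tendsto_natCast_atTop_atTop)

lemma tsum_ge_telescope {m : ℕ} (hm : 1 ≤ m) {s : ℝ} (hs : 0 < s) :
    (m : ℝ)⁻¹ * (s ^ m)⁻¹ ≤ ∑' k : ℕ, ((s + k) ^ (m + 1))⁻¹ := by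
  set c : ℕ → ℝ := fun k => ((s + k) ^ m)⁻¹ with hc_def
  have hck : ∀ k : ℕ, (0:ℝ) < s + k := fun k => by positivity
  have hmono : ∀ k, c (k + 1) ≤ c k := by
    intro k
    apply inv_anti₀ (by positivity)
    apply pow_le_pow_left₀ (hck k).le (by push_cast; linarith)
  have hterm : ∀ k : ℕ, (m : ℝ)⁻¹ * (c k - c (k + 1)) ≤ ((s + k) ^ (m + 1))⁻¹ := by
    intro k
    have hA : (0:ℝ) < s + k := hck k
    set A : ℝ := s + (k : ℝ) with hA_def
    set B : ℝ := A + 1 with hB_def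
    have hB : 0 < B := by positivity
    have hAB : A ≤ B := by linarith
    have hc2 : c (k + 1) = (B ^ m)⁻¹ := by simp only [hc_def, hB_def, hA_def]; push_cast; ring_nf
    have h1 : c k - c (k + 1) = (B ^ m - A ^ m) / (A ^ m * B ^ m) := by
      rw [hc2]
      show (A ^ m)⁻¹ - (B ^ m)⁻¹ = _
      field_simp
    have h2 : B ^ m - A ^ m ≤ (m : ℝ) * B ^ (m - 1) := by
      have := pow_sub_pow_le_mul hA.le hAB m
      have hBA : B - A = 1 := by rw [hB_def]; ring
      rw [hBA, mul_one] at this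
      exact this
    have h4 : (B ^ m - A ^ m) / (A ^ m * B ^ m) ≤ (m : ℝ) / A ^ (m + 1) := by
      have h3 : (B ^ m - A ^ m) / (A ^ m * B ^ m) ≤ ((m : ℝ) * B ^ (m - 1)) / (A ^ m * B ^ m) := by
        gcongr
      refine h3.trans ?_
      rw [div_le_div_iff₀ (by positivity) (by positivity)]
      have e1 : B ^ m = B ^ (m - 1) * B := by
        rw [← pow_succ]; congr 1; omega
      have e2 : A ^ (m + 1) = A ^ m * A := by rw [pow_succ]
      rw [e1, e2]
      have hpa : (0:ℝ) < A ^ m := by positivity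
      have hpb : (0:ℝ) < B ^ (m - 1) := by positivity
      nlinarith [mul_nonneg (mul_nonneg (mul_nonneg (Nat.cast_nonneg (α := ℝ) m) hpa.le) hpb.le)
        (sub_nonneg.2 hAB)]
    have hm0 : ((m : ℝ))⁻¹ * ((m : ℝ) / A ^ (m + 1)) = (A ^ (m + 1))⁻¹ := by
      have : (m : ℝ) ≠ 0 := by positivity
      field_simp
    calc (m : ℝ)⁻¹ * (c k - c (k + 1)) ≤ (m : ℝ)⁻¹ * ((m : ℝ) / A ^ (m + 1)) := by
          apply mul_le_mul_of_nonneg_left ((h1 ▸ h4)) (by positivity)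
      _ = (A ^ (m + 1))⁻¹ := hm0
  have hsumL : Summable (fun k => (m : ℝ)⁻¹ * (c k - c (k + 1))) := by
    apply Summable.mul_left
    refine summable_of_sum_range_le (c := c 0) (fun k => sub_nonneg.2 (hmono k)) (fun n => ?_)
    rw [Finset.sum_range_sub' c n]
    have h5 : 0 ≤ c n := by positivity
    linarith
  have hsumR : Summable (fun k : ℕ => ((s + k) ^ (m + 1))⁻¹) := summable_spow (by omega) hs
  have := Summable.tsum_le_tsum hterm hsumL hsumR
  refine le_trans (le_of_eq ?_) this
  rw [tsum_mul_left, tsum_sub_succ hmono (tendsto_cpow_inv hm hs)]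
  simp [hc_def]

lemma tsum_le_telescope {m : ℕ} (hm : 1 ≤ m) {s : ℝ} (hs : 0 < s) :
    ∑' k : ℕ, ((s + 1 + k) ^ (m + 1))⁻¹ ≤ (m : ℝ)⁻¹ * (s ^ m)⁻¹ := by
  set c : ℕ → ℝ := fun k => ((s + k) ^ m)⁻¹ with hc_def
  have hck : ∀ k : ℕ, (0:ℝ) < s + k := fun k => by positivity
  have hmono : ∀ k, c (k + 1) ≤ c k := by
    intro k
    apply inv_anti₀ (by positivity)
    apply pow_le_pow_left₀ (hck k).le (by push_cast; linarith)
  have hterm : ∀ k : ℕ, ((s + 1 + k) ^ (m + 1))⁻¹ ≤ (m : ℝ)⁻¹ * (c k - c (k + 1)) := by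
    intro k
    have hA : (0:ℝ) < s + k := hck k
    set A : ℝ := s + (k : ℝ) with hA_def
    set B : ℝ := A + 1 with hB_def
    have hB : 0 < B := by positivity
    have hAB : A ≤ B := by linarith
    have hc2 : c (k + 1) = (B ^ m)⁻¹ := by simp only [hc_def, hB_def, hA_def]; push_cast; ring_nf
    have h1 : c k - c (k + 1) = (B ^ m - A ^ m) / (A ^ m * B ^ m) := by
      rw [hc2]
      show (A ^ m)⁻¹ - (B ^ m)⁻¹ = _
      field_simp
    have h2 : (m : ℝ) * A ^ (m - 1) ≤ B ^ m - A ^ m := by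
      have := mul_le_pow_sub_pow hA.le hAB m
      have hBA : B - A = 1 := by rw [hB_def]; ring
      rw [hBA, mul_one] at this
      exact this
    have h4 : (m : ℝ) / B ^ (m + 1) ≤ (B ^ m - A ^ m) / (A ^ m * B ^ m) := by
      have h3 : ((m : ℝ) * A ^ (m - 1)) / (A ^ m * B ^ m) ≤ (B ^ m - A ^ m) / (A ^ m * B ^ m) := by
        gcongr
      refine le_trans ?_ h3
      rw [div_le_div_iff₀ (by positivity) (by positivity)]
      have e1 : A ^ m = A ^ (m - 1) * A := by
        rw [← pow_succ]; congr 1; omega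
      have e2 : B ^ (m + 1) = B ^ m * B := by rw [pow_succ]
      rw [e1, e2]
      have hpa : (0:ℝ) < A ^ (m - 1) := by positivity
      have hpb : (0:ℝ) < B ^ m := by positivity
      nlinarith [mul_nonneg (mul_nonneg (mul_nonneg (Nat.cast_nonneg (α := ℝ) m) hpa.le) hpb.le)
        (sub_nonneg.2 hAB)]
    have hBs : s + 1 + (k:ℝ) = B := by rw [hB_def, hA_def]; ring
    rw [hBs]
    calc (B ^ (m + 1))⁻¹ = (m : ℝ)⁻¹ * ((m : ℝ) / B ^ (m + 1)) := by
          have : (m : ℝ) ≠ 0 := by positivity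
          field_simp
      _ ≤ (m : ℝ)⁻¹ * (c k - c (k + 1)) := by
          apply mul_le_mul_of_nonneg_left (h1 ▸ h4) (by positivity)
  have hsumL : Summable (fun k : ℕ => ((s + 1 + k) ^ (m + 1))⁻¹) := summable_spow (by omega) (by positivity)
  have hsumR : Summable (fun k => (m : ℝ)⁻¹ * (c k - c (k + 1))) := by
    apply Summable.mul_left
    refine summable_of_sum_range_le (c := c 0) (fun k => sub_nonneg.2 (hmono k)) (fun n => ?_)
    rw [Finset.sum_range_sub' c n]
    have h5 : 0 ≤ c n := by positivity
    linarith
  have := Summable.tsum_le_tsum hterm hsumL hsumR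
  refine le_trans this (le_of_eq ?_)
  rw [tsum_mul_left, tsum_sub_succ hmono (tendsto_cpow_inv hm hs)]
  simp [hc_def]

lemma larith {r : ℕ} (hr : 2 ≤ r) {t : ℝ} (ht : 0 < t) :
    ((r : ℝ))⁻¹ ≤ (r : ℝ) / t + (t / (t + 1)) ^ (r + 1) := by
  have hr' : (2 : ℝ) ≤ (r : ℝ) := by exact_mod_cast hr
  have ht1 : (0 : ℝ) < t + 1 := by linarith
  have hpow : (0 : ℝ) ≤ (t / (t + 1)) ^ (r + 1) := by positivity
  rcases le_or_gt t ((r : ℝ) ^ 2) with h | h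
  · have h1 : (r : ℝ)⁻¹ ≤ (r : ℝ) / t := by
      rw [inv_eq_one_div, div_le_div_iff₀ (by linarith) ht]
      nlinarith
    linarith
  · have hb : 1 - ((r : ℝ) + 1) / t ≤ (t / (t + 1)) ^ (r + 1) := by
      have h0 := one_add_mul_le_pow (a := -(1 / (t + 1))) (by
        have h8 : 0 < 1 / (t + 1) := by positivity
        have h7 : 1 / (t + 1) ≤ 1 := by rw [div_le_one ht1]; linarith
        linarith) (r + 1)
      have e1 : (1 : ℝ) + -(1 / (t + 1)) = t / (t + 1) := by field_simp; ring
      have e2 : (1 : ℝ) + ((r : ℝ) + 1) * (-(1 / (t + 1))) = 1 - ((r : ℝ) + 1) / (t + 1) := by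
        push_cast; ring
      rw [e1] at h0
      have e3 : ((r + 1 : ℕ) : ℝ) = (r : ℝ) + 1 := by push_cast; ring
      have h0' : (1 : ℝ) - ((r : ℝ) + 1) / (t + 1) ≤ (t / (t + 1)) ^ (r + 1) := by
        calc (1 : ℝ) - ((r : ℝ) + 1) / (t + 1) = 1 + ((r + 1 : ℕ) : ℝ) * (-(1 / (t + 1))) := by
              push_cast; ring
          _ ≤ (t / (t + 1)) ^ (r + 1) := h0
      have h5 : ((r : ℝ) + 1) / (t + 1) ≤ ((r : ℝ) + 1) / t := by
        apply div_le_div_of_nonneg_left (by linarith) ht (by linarith)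
      linarith
    have hr2 : (0 : ℝ) < (r : ℝ) := by linarith
    have h2 : 1 / (r : ℝ) + 1 / t ≤ 1 := by
      have ha : 1 / t < 1 / (r : ℝ) ^ 2 := by
        apply one_div_lt_one_div_of_lt (by positivity) h
      have hbq : 1 / (r : ℝ) + 1 / (r : ℝ) ^ 2 ≤ 1 := by
        rw [div_add_div _ _ (ne_of_gt hr2) (by positivity), div_le_one (by positivity)]
        nlinarith
      linarith
    have h6 : ((r : ℝ) + 1) / t = (r : ℝ) / t + 1 / t := by ring
    rw [inv_eq_one_div]
    linarith

lemma spow_split {p : ℕ} (hp : 2 ≤ p) {t : ℝ} (ht : 0 < t) :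
    Spow p t = (t ^ p)⁻¹ + ∑' k : ℕ, ((t + 1 + k) ^ p)⁻¹ := by
  rw [Spow, Summable.tsum_eq_zero_add (summable_spow hp ht)]
  congr 1
  · norm_num
  · apply tsum_congr
    intro k
    congr 2
    push_cast
    ring

lemma key_ineq {n : ℕ} (hn : 1 ≤ n) {t : ℝ} (ht : 0 < t) :
    Spow (n + 2) t ≤ ((n : ℝ) + 2) * t * Spow (n + 3) t := by
  have ht1 : (0 : ℝ) < t + 1 := by linarith
  have hL2 : Spow (n + 2) t ≤ (t ^ (n + 2))⁻¹ + ((n : ℝ) + 1)⁻¹ * (t ^ (n + 1))⁻¹ := by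
    rw [spow_split (by omega) ht]
    have := tsum_le_telescope (m := n + 1) (by omega) ht
    have hcast : ((n + 1 : ℕ) : ℝ) = (n : ℝ) + 1 := by push_cast; ring
    rw [hcast] at this
    have heq : (∑' k : ℕ, ((t + 1 + k) ^ (n + 1 + 1))⁻¹) = ∑' k : ℕ, ((t + 1 + k) ^ (n + 2))⁻¹ := by
      apply tsum_congr; intro k; norm_num
    rw [heq] at this
    linarith
  have hL1 : (t ^ (n + 3))⁻¹ + ((n : ℝ) + 2)⁻¹ * ((t + 1) ^ (n + 2))⁻¹ ≤ Spow (n + 3) t := by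
    rw [spow_split (by omega) ht]
    have := tsum_ge_telescope (m := n + 2) (by omega) ht1
    have hcast : ((n + 2 : ℕ) : ℝ) = (n : ℝ) + 2 := by push_cast; ring
    rw [hcast] at this
    have heq : (∑' k : ℕ, ((t + 1 + k) ^ (n + 2 + 1))⁻¹) = ∑' k : ℕ, ((t + 1 + k) ^ (n + 3))⁻¹ := by
      apply tsum_congr; intro k; norm_num
    rw [heq] at this
    linarith
  have harith : (t ^ (n + 2))⁻¹ + ((n : ℝ) + 1)⁻¹ * (t ^ (n + 1))⁻¹ ≤
      ((n : ℝ) + 2) * t * ((t ^ (n + 3))⁻¹ + ((n : ℝ) + 2)⁻¹ * ((t + 1) ^ (n + 2))⁻¹) := by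
    have hn2 : ((n : ℝ) + 2) ≠ 0 := by positivity
    have e1 : ((n : ℝ) + 2) * t * ((t ^ (n + 3))⁻¹ + ((n : ℝ) + 2)⁻¹ * ((t + 1) ^ (n + 2))⁻¹)
        = ((n : ℝ) + 2) * (t ^ (n + 2))⁻¹ + t * ((t + 1) ^ (n + 2))⁻¹ := by
      have e2 : t * (t ^ (n + 3))⁻¹ = (t ^ (n + 2))⁻¹ := by
        rw [pow_succ]
        field_simp
      field_simp
      ring
    rw [e1]
    have hr := larith (r := n + 1) (by omega) ht
    have hcast : ((n + 1 : ℕ) : ℝ) = (n : ℝ) + 1 := by push_cast; ring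
    rw [hcast] at hr
    have hmul := mul_le_mul_of_nonneg_right hr (le_of_lt (inv_pos.2 (pow_pos ht (n + 1))))
    have i1 : (((n : ℝ) + 1) / t + (t / (t + 1)) ^ (n + 1 + 1)) * (t ^ (n + 1))⁻¹
        = ((n : ℝ) + 1) * (t ^ (n + 2))⁻¹ + t * ((t + 1) ^ (n + 2))⁻¹ := by
      rw [div_pow]
      have h9 : (t + 1) ^ (n + 2) ≠ 0 := by positivity
      have h10 : t ^ (n + 1) ≠ 0 := by positivity
      field_simp
      ring
    rw [i1] at hmul
    linarith
  calc Spow (n + 2) t ≤ (t ^ (n + 2))⁻¹ + ((n : ℝ) + 1)⁻¹ * (t ^ (n + 1))⁻¹ := hL2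
    _ ≤ ((n : ℝ) + 2) * t * ((t ^ (n + 3))⁻¹ + ((n : ℝ) + 2)⁻¹ * ((t + 1) ^ (n + 2))⁻¹) := harith
    _ ≤ ((n : ℝ) + 2) * t * Spow (n + 3) t := by
        apply mul_le_mul_of_nonneg_left hL1 (by positivity)

lemma hasDerivAt_U {n : ℕ} (hn : 1 ≤ n) {t : ℝ} (ht : 0 < t) :
    HasDerivAt (fun s => s * Spow (n + 2) s)
      (Spow (n + 2) t - ((n : ℝ) + 2) * t * Spow (n + 3) t) t := by
  have h1 := (hasDerivAt_id t).mul (hasDerivAt_Spow (p := n + 2) (by omega) ht)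
  refine h1.congr_deriv ?_
  push_cast
  simp only [id_eq]
  ring

lemma U_antitone {n : ℕ} (hn : 1 ≤ n) : AntitoneOn (fun s => s * Spow (n + 2) s) (Ioi 0) := by
  apply antitoneOn_of_deriv_nonpos (convex_Ioi 0)
  · intro t ht
    exact (hasDerivAt_U hn ht).continuousAt.continuousWithinAt
  · intro t ht
    rw [interior_Ioi] at ht
    exact (hasDerivAt_U hn ht).differentiableAt.differentiableWithinAt
  · intro t ht
    rw [interior_Ioi] at ht
    rw [(hasDerivAt_U hn ht).deriv]
    have := key_ineq hn ht
    linarith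

lemma tangent_bound {n : ℕ} (hn : 1 ≤ n) {c t : ℝ} (hc : 0 < c) (ht : 0 < t) :
    -Spow (n + 1) t ≤ -Spow (n + 1) c
      + ((n : ℝ) + 1) * c * Spow (n + 2) c * (Real.log t - Real.log c) := by
  set v : ℝ → ℝ := fun x => -Spow (n + 1) (Real.exp x) with hv_def
  set w : ℝ → ℝ := fun x => ((n : ℝ) + 1) * (Real.exp x * Spow (n + 2) (Real.exp x)) with hw_def
  have hv : ∀ x : ℝ, HasDerivAt v (w x) x := by
    intro x
    have h1 := (hasDerivAt_Spow (p := n + 1) (by omega) (Real.exp_pos x)).comp x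
      (Real.hasDerivAt_exp x)
    have h2 := h1.neg
    refine h2.congr_deriv ?_
    simp only [hw_def]
    push_cast
    ring
  have hw_anti : ∀ {x y : ℝ}, x ≤ y → w y ≤ w x := by
    intro x y hxy
    have h3 := U_antitone hn (mem_Ioi.2 (Real.exp_pos x)) (mem_Ioi.2 (Real.exp_pos y))
      (Real.exp_le_exp.2 hxy)
    simp only [hw_def]
    exact mul_le_mul_of_nonneg_left h3 (by positivity)
  set x₀ := Real.log c with hx0_def
  set y := Real.log t with hy_def
  have hvc : v x₀ = -Spow (n + 1) c := by simp [hv_def, hx0_def, Real.exp_log hc]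
  have hvt : v y = -Spow (n + 1) t := by simp [hv_def, hy_def, Real.exp_log ht]
  have hwc : w x₀ = ((n : ℝ) + 1) * c * Spow (n + 2) c := by
    simp only [hw_def, hx0_def, Real.exp_log hc]
    ring
  have goal_eq : -Spow (n + 1) t ≤ -Spow (n + 1) c
      + ((n : ℝ) + 1) * c * Spow (n + 2) c * (y - x₀) ↔ v y ≤ v x₀ + w x₀ * (y - x₀) := by
    rw [hvc, hvt, hwc]
  rw [show Real.log t - Real.log c = y - x₀ from rfl, goal_eq]
  rcases lt_trichotomy x₀ y with hlt | heq | hgt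
  · obtain ⟨ξ, hξ, hξ'⟩ := exists_hasDerivAt_eq_slope v w hlt
      (fun z _ => (hv z).continuousAt.continuousWithinAt) (fun z _ => hv z)
    have h4 : w ξ ≤ w x₀ := hw_anti hξ.1.le
    have hyx : (0 : ℝ) < y - x₀ := by linarith
    have h5 : v y - v x₀ = w ξ * (y - x₀) := by
      rw [hξ']
      field_simp
    have h6 : w ξ * (y - x₀) ≤ w x₀ * (y - x₀) := mul_le_mul_of_nonneg_right h4 hyx.le
    linarith
  · rw [← heq]
    simp
  · obtain ⟨ξ, hξ, hξ'⟩ := exists_hasDerivAt_eq_slope v w hgt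
      (fun z _ => (hv z).continuousAt.continuousWithinAt) (fun z _ => hv z)
    have h4 : w x₀ ≤ w ξ := hw_anti hξ.2.le
    have hyx : (0 : ℝ) < x₀ - y := by linarith
    have h5 : v x₀ - v y = w ξ * (x₀ - y) := by
      rw [hξ']
      field_simp
    have h6 : w x₀ * (x₀ - y) ≤ w ξ * (x₀ - y) := mul_le_mul_of_nonneg_right h4 hyx.le
    nlinarith [h5, h6]

lemma summable_aux : Summable (fun k : ℕ => (((k : ℝ) + 1) ^ 2)⁻¹) := by
  simpa using (summable_nat_add_iff (f := fun k : ℕ => (((k : ℝ)) ^ 2)⁻¹) 1).2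
    (by simpa [one_div] using (summable_one_div_nat_pow (p := 2)).2 le_rfl)

lemma F_repr (j : ℕ) {y : ℝ} (hy : 0 < y) :
    ((j : ℝ) + 1)⁻¹ - (y + j)⁻¹ = (y - 1) / (((j : ℝ) + 1) * (y + j)) := by
  have h1 : ((j : ℝ) + 1) ≠ 0 := by positivity
  have h2 : (y + (j : ℝ)) ≠ 0 := by positivity
  field_simp
  ring

lemma F_bound {x : ℝ} (hx : 0 < x) (j : ℕ) {y : ℝ} (hy : y ∈ Ioo (x / 2) (x + 1)) :
    ‖((j : ℝ) + 1)⁻¹ - (y + j)⁻¹‖ ≤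
      ((x + 2) * (min (x / 2) 1)⁻¹) * (((j : ℝ) + 1) ^ 2)⁻¹ := by
  obtain ⟨hy1, hy2⟩ := hy
  have hy0 : 0 < y := lt_trans (by positivity) hy1
  have hm : 0 < min (x / 2) 1 := lt_min (by positivity) one_pos
  rw [F_repr j hy0]
  rw [Real.norm_eq_abs, abs_div]
  have hden : (0 : ℝ) < ((j : ℝ) + 1) * (y + j) := by positivity
  rw [abs_of_pos hden]
  have hnum : |y - 1| ≤ x + 2 := by
    rw [abs_le]
    constructor <;> nlinarith
  have hden2 : min (x / 2) 1 * (((j : ℝ) + 1) ^ 2) ≤ ((j : ℝ) + 1) * (y + j) := by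
    have h3 : min (x / 2) 1 * (1 + (j : ℝ)) ≤ x / 2 + j := min_mul_le_add (by positivity) j
    have h4 : x / 2 + (j : ℝ) ≤ y + j := by linarith
    have h5 : ((j : ℝ) + 1) * (min (x / 2) 1 * (1 + (j : ℝ))) ≤ ((j : ℝ) + 1) * (y + j) := by
      apply mul_le_mul_of_nonneg_left (by linarith) (by positivity)
    calc min (x / 2) 1 * (((j : ℝ) + 1) ^ 2) = ((j : ℝ) + 1) * (min (x / 2) 1 * (1 + (j : ℝ))) := by
          ring
      _ ≤ _ := h5
  calc |y - 1| / (((j : ℝ) + 1) * (y + j))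
      ≤ (x + 2) / (min (x / 2) 1 * (((j : ℝ) + 1) ^ 2)) := by
        apply div_le_div₀ (by linarith) hnum (by positivity) hden2
    _ = ((x + 2) * (min (x / 2) 1)⁻¹) * (((j : ℝ) + 1) ^ 2)⁻¹ := by
        field_simp
  
lemma summable_F {x : ℝ} (hx : 0 < x) :
    Summable (fun j : ℕ => ((j : ℝ) + 1)⁻¹ - (x + j)⁻¹) := by
  apply Summable.of_norm_bounded (summable_aux.mul_left ((x + 2) * (min (x / 2) 1)⁻¹))
  intro j
  exact F_bound hx j ⟨by linarith, by linarith⟩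

noncomputable def g1 (x : ℝ) : ℝ :=
  -Real.eulerMascheroniConstant + ∑' k : ℕ, (((k : ℝ) + 1)⁻¹ - (x + k)⁻¹)

noncomputable def MN (N : ℕ) (x : ℝ) : ℝ :=
  x * Real.log N + Real.log (Nat.factorial N) - ∑ j ∈ Finset.range (N + 1), Real.log (x + j)

noncomputable def DN (N : ℕ) (x : ℝ) : ℝ :=
  Real.log N - ∑ j ∈ Finset.range (N + 1), (x + j)⁻¹

lemma hasDerivAt_MN (N : ℕ) {x : ℝ} (hx : 0 < x) : HasDerivAt (MN N) (DN N x) x := by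
  have h1 : HasDerivAt (fun y : ℝ => y * Real.log N) (Real.log N) x :=
    hasDerivAt_mul_const _
  have h2 : HasDerivAt (fun y : ℝ => ∑ j ∈ Finset.range (N + 1), Real.log (y + j))
      (∑ j ∈ Finset.range (N + 1), (x + j)⁻¹) x := by
    apply HasDerivAt.fun_sum
    intro j _
    have h3 : (0 : ℝ) < x + j := by positivity
    have h4 := (((hasDerivAt_id x).add_const ((j : ℕ) : ℝ)).log (ne_of_gt h3))
    refine h4.congr_deriv ?_
    simp [one_div]
  exact (h1.add_const (Real.log (Nat.factorial N))).sub h2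

lemma MN_eq {N : ℕ} (hN : 1 ≤ N) {x : ℝ} (hx : 0 < x) :
    MN N x = Real.log (Real.GammaSeq x N) := by
  have hN0 : (0 : ℝ) < N := by exact_mod_cast hN
  have hprod : ∀ j ∈ Finset.range (N + 1), x + (j : ℝ) ≠ 0 := by
    intro j _
    positivity
  have hprodpos : (0 : ℝ) < ∏ j ∈ Finset.range (N + 1), (x + j) := by
    apply Finset.prod_pos
    intro j _
    positivity
  have hnum : (0 : ℝ) < (N : ℝ) ^ x * (Nat.factorial N : ℝ) := by
    apply mul_pos (Real.rpow_pos_of_pos hN0 x)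
    exact_mod_cast Nat.factorial_pos N
  rw [Real.GammaSeq, Real.log_div (ne_of_gt hnum) (ne_of_gt hprodpos),
    Real.log_mul (ne_of_gt (Real.rpow_pos_of_pos hN0 x)) (by exact_mod_cast (Nat.factorial_pos N).ne'),
    Real.log_rpow hN0, Real.log_prod hprod, MN]

lemma tlu_of_forall {F : ℕ → ℝ → ℝ} {f : ℝ → ℝ} {s : Set ℝ}
    (h : ∀ x ∈ s, ∃ t, t ∈ 𝓝 x ∧ TendstoUniformlyOn F f atTop t) :
    TendstoLocallyUniformlyOn F f atTop s := by
  intro u hu x hx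
  obtain ⟨t, htm, htu⟩ := h x hx
  exact ⟨t, mem_nhdsWithin_of_mem_nhds htm, htu u hu⟩

lemma const_tuo {c : ℕ → ℝ} {L : ℝ} (h : Tendsto c atTop (𝓝 L)) (s : Set ℝ) :
    TendstoUniformlyOn (fun n (_ : ℝ) => c n) (fun _ => L) atTop s := by
  rw [Metric.tendstoUniformlyOn_iff]
  intro ε hε
  filter_upwards [Metric.tendsto_nhds.1 h ε hε] with n hn y _
  rw [dist_comm]
  exact hn

lemma tuo_shift {F : ℕ → ℝ → ℝ} {f : ℝ → ℝ} {s : Set ℝ}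
    (h : TendstoUniformlyOn F f atTop s) :
    TendstoUniformlyOn (fun N => F (N + 1)) f atTop s := by
  intro u hu
  have := h u hu
  rw [eventually_atTop] at this ⊢
  obtain ⟨a, ha⟩ := this
  exact ⟨a, fun N hN => ha (N + 1) (by omega)⟩

lemma tendsto_cN : Tendsto (fun N : ℕ => Real.log N - (harmonic (N + 1) : ℝ)) atTop
    (𝓝 (-Real.eulerMascheroniConstant)) := by
  have h1 := Real.tendsto_harmonic_sub_log
  have h2 : Tendsto (fun N : ℕ => (harmonic (N + 1) : ℝ) - Real.log (N + 1)) atTop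
      (𝓝 Real.eulerMascheroniConstant) := by
    have h2' := h1.comp (tendsto_add_atTop_nat 1)
    apply h2'.congr
    intro N
    simp only [Function.comp_apply]
    push_cast
    ring
  have h3 : Tendsto (fun N : ℕ => Real.log ((N : ℝ) + 1) - Real.log N) atTop (𝓝 0) := by
    have h4 : Tendsto (fun N : ℕ => ((N : ℝ) + 1) / N) atTop (𝓝 1) := by
      have h5 : Tendsto (fun N : ℕ => 1 + (N : ℝ)⁻¹) atTop (𝓝 (1 + 0)) :=
        tendsto_const_nhds.add (tendsto_inv_atTop_zero.comp tendsto_natCast_atTop_atTop)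
      rw [add_zero] at h5
      apply h5.congr'
      filter_upwards [eventually_gt_atTop 0] with N hN
      have : (N : ℝ) ≠ 0 := by positivity
      field_simp
    have h6 : Tendsto (fun N : ℕ => Real.log (((N : ℝ) + 1) / N)) atTop (𝓝 (Real.log 1)) :=
      ((Real.continuousAt_log one_ne_zero).tendsto).comp h4
    rw [Real.log_one] at h6
    apply h6.congr'
    filter_upwards [eventually_gt_atTop 0] with N hN
    have hN0 : (0 : ℝ) < N := by exact_mod_cast hN
    rw [Real.log_div (by positivity) (by positivity)]
  have h7 := (h2.add h3).neg
  rw [add_zero] at h7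
  apply h7.congr'
  filter_upwards [] with N
  push_cast
  ring

lemma tlu_DN : TendstoLocallyUniformlyOn DN g1 atTop (Ioi 0) := by
  apply tlu_of_forall
  intro x hx
  have hx0 : (0 : ℝ) < x := hx
  refine ⟨Ioo (x / 2) (x + 1), Ioo_mem_nhds (by linarith) (by linarith), ?_⟩
  have hsum_u : Summable (fun j : ℕ => ((x + 2) * (min (x / 2) 1)⁻¹) * (((j : ℝ) + 1) ^ 2)⁻¹) :=
    summable_aux.mul_left _
  have htsum := tendstoUniformlyOn_tsum_nat hsum_u
    (f := fun j (y : ℝ) => ((j : ℝ) + 1)⁻¹ - (y + j)⁻¹)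
    (fun j y hy => F_bound hx0 j hy)
  have h1 := (const_tuo tendsto_cN (Ioo (x / 2) (x + 1))).add (tuo_shift htsum)
  have hDN : ∀ N : ℕ, EqOn
      (fun y : ℝ => (Real.log N - (harmonic (N + 1) : ℝ))
        + ∑ j ∈ Finset.range (N + 1), (((j : ℝ) + 1)⁻¹ - (y + j)⁻¹))
      (DN N) (Ioo (x / 2) (x + 1)) := by
    intro N y _
    simp only [DN]
    rw [Finset.sum_sub_distrib]
    have hh : (harmonic (N + 1) : ℝ) = ∑ j ∈ Finset.range (N + 1), ((j : ℝ) + 1)⁻¹ := by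
      rw [harmonic]
      push_cast
      rfl
    rw [hh]
    ring
  exact (h1.congr (Eventually.of_forall hDN)) |>.congr_right (fun y _ => rfl)

lemma hasDerivAt_logGamma {x : ℝ} (hx : 0 < x) :
    HasDerivAt (fun y => Real.log (Real.Gamma y)) (g1 x) x := by
  apply hasDerivAt_of_tendstoLocallyUniformlyOn (f := MN) isOpen_Ioi tlu_DN ?_ ?_ (mem_Ioi.2 hx)
  · filter_upwards [] with N y hy
    exact hasDerivAt_MN N hy
  · intro y hy
    have h1 := Real.GammaSeq_tendsto_Gamma y
    have h2 : Tendsto (fun N => Real.log (Real.GammaSeq y N)) atTop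
        (𝓝 (Real.log (Real.Gamma y))) :=
      ((Real.continuousAt_log (Real.Gamma_pos_of_pos hy).ne').tendsto).comp h1
    apply h2.congr'
    filter_upwards [eventually_ge_atTop 1] with N hN
    exact (MN_eq hN hy).symm

lemma hasDerivAt_g1 {x : ℝ} (hx : 0 < x) : HasDerivAt g1 (Spow 2 x) x := by
  have hx2 : (0 : ℝ) < x / 2 := by linarith
  have hterm : ∀ (j : ℕ) (y : ℝ), y ∈ Ioi (x / 2) →
      HasDerivAt (fun z : ℝ => ((j : ℝ) + 1)⁻¹ - (z + j)⁻¹) (((y + j) ^ 2)⁻¹) y := by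
    intro j y hy
    have hy' : (0 : ℝ) < y + j := by
      have h8 : x / 2 < y := hy
      have h9 : (0 : ℝ) ≤ (j : ℝ) := Nat.cast_nonneg j
      linarith
    have h4 := hasDerivAt_term 1 le_rfl j hy'
    simp only [pow_one] at h4
    have h5 := (hasDerivAt_const y (((j : ℝ) + 1)⁻¹)).sub h4
    refine h5.congr_deriv ?_
    norm_num
  have key := hasDerivAt_tsum_of_isPreconnected
    (u := fun j : ℕ => ((x / 2 + (j : ℝ)) ^ 2)⁻¹)
    (summable_spow le_rfl hx2) isOpen_Ioi isPreconnected_Ioi hterm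
    (fun j y hy => ?_) (mem_Ioi.2 (by linarith : x / 2 < x)) (summable_F hx)
    (mem_Ioi.2 (by linarith : x / 2 < x))
  · have h6 := (hasDerivAt_const x (-Real.eulerMascheroniConstant)).add key
    have h7 : (0 : ℝ) + (∑' j : ℕ, ((x + j) ^ 2)⁻¹) = Spow 2 x := by
      rw [zero_add]; rfl
    rw [h7] at h6
    exact h6
  · have hy0 : x / 2 < y := hy
    have hy1 : (0 : ℝ) < y := lt_trans hx2 hy0
    have hyj : (0 : ℝ) < y + j := by positivity
    rw [Real.norm_eq_abs, abs_of_pos (by positivity)]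
    apply inv_anti₀ (by positivity)
    apply pow_le_pow_left₀ (by positivity) (by linarith) _

noncomputable def psi (x : ℝ) : ℝ := deriv (fun t => Real.log (Real.Gamma t)) x

noncomputable def polygamma (k : ℕ) : ℝ → ℝ := iteratedDeriv k psi

lemma psi_eq {x : ℝ} (hx : 0 < x) : psi x = g1 x := (hasDerivAt_logGamma hx).deriv

lemma hasDerivAt_psi {x : ℝ} (hx : 0 < x) : HasDerivAt psi (Spow 2 x) x := by
  apply (hasDerivAt_g1 hx).congr_of_eventuallyEq
  filter_upwards [Ioi_mem_nhds hx] with y hy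
  exact psi_eq hy

noncomputable def Pm (m : ℕ) (x : ℝ) : ℝ := (-1 : ℝ) ^ (m + 1) * (Nat.factorial m) * Spow (m + 1) x

lemma hasDerivAt_Pm {m : ℕ} (hm : 1 ≤ m) {x : ℝ} (hx : 0 < x) :
    HasDerivAt (Pm m) (Pm (m + 1) x) x := by
  have h1 := (hasDerivAt_Spow (p := m + 1) (by omega) hx).const_mul
    ((-1 : ℝ) ^ (m + 1) * (Nat.factorial m))
  refine h1.congr_deriv ?_
  simp only [Pm, Nat.factorial_succ]
  push_cast
  rw [pow_succ]
  ring

lemma polygamma_eq {m : ℕ} (hm : 1 ≤ m) : ∀ {x : ℝ}, 0 < x → polygamma m x = Pm m x := by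
  induction m with
  | zero => omega
  | succ m ih =>
    intro x hx
    rcases eq_or_lt_of_le hm with h1 | h1
    · -- m + 1 = 1
      have hm0 : m = 0 := by omega
      subst hm0
      rw [polygamma, iteratedDeriv_one, (hasDerivAt_psi hx).deriv, Pm]
      simp [Spow]
    · have hm1 : 1 ≤ m := by omega
      rw [polygamma, iteratedDeriv_succ]
      have heq : iteratedDeriv m psi =ᶠ[𝓝 x] Pm m := by
        filter_upwards [Ioi_mem_nhds hx] with y hy
        exact ih hm1 hy
      rw [Filter.EventuallyEq.deriv_eq heq, (hasDerivAt_Pm hm1 hx).deriv]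

lemma hasDerivAt_polygamma (m : ℕ) {x : ℝ} (hx : 0 < x) :
    HasDerivAt (polygamma m) (polygamma (m + 1) x) x := by
  rcases Nat.eq_zero_or_pos m with h | h
  · subst h
    rw [polygamma_eq le_rfl hx]
    have h2 : polygamma 0 = psi := by rw [polygamma, iteratedDeriv_zero]
    rw [h2]
    have h3 : Pm 1 x = Spow 2 x := by simp [Pm]
    rw [h3]
    exact hasDerivAt_psi hx
  · rw [polygamma_eq (by omega) hx]
    apply (hasDerivAt_Pm h hx).congr_of_eventuallyEq
    filter_upwards [Ioi_mem_nhds hx] with y hy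
    exact polygamma_eq h hy

lemma identric_pos {a b : ℝ} (ha : 0 < a) (hb : 0 < b) :
    0 < (1 / Real.exp 1) * (b ^ b / a ^ a) ^ (1 / (b - a)) := by
  apply mul_pos (by positivity)
  apply Real.rpow_pos_of_pos
  apply div_pos (Real.rpow_pos_of_pos hb b) (Real.rpow_pos_of_pos ha a)

lemma identric_log {a b : ℝ} (ha : 0 < a) (hb : 0 < b) (hab : a ≠ b) :
    Real.log ((1 / Real.exp 1) * (b ^ b / a ^ a) ^ (1 / (b - a)))
      = (b * Real.log b - a * Real.log a) / (b - a) - 1 := by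
  have h1 : (0 : ℝ) < b ^ b / a ^ a :=
    div_pos (Real.rpow_pos_of_pos hb b) (Real.rpow_pos_of_pos ha a)
  rw [Real.log_mul (by positivity) (ne_of_gt (Real.rpow_pos_of_pos h1 _)),
    Real.log_rpow h1, Real.log_div (ne_of_gt (Real.rpow_pos_of_pos hb b))
      (ne_of_gt (Real.rpow_pos_of_pos ha a)),
    Real.log_rpow hb, Real.log_rpow ha, one_div, Real.log_inv, Real.log_exp]
  rw [div_eq_inv_mul]
  ring

lemma main_aux {a b : ℝ} (ha : 0 < a) (hab' : a < b) {n : ℕ} (hn : 1 ≤ n) :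
    (-1 : ℝ) ^ n * ((polygamma (n - 1) a - polygamma (n - 1) b) / (a - b)) ≤
      (-1 : ℝ) ^ n * polygamma n ((1 / Real.exp 1) * (b ^ b / a ^ a) ^ (1 / (b - a))) := by
  have hb : 0 < b := lt_trans ha hab'
  set I := (1 / Real.exp 1) * (b ^ b / a ^ a) ^ (1 / (b - a)) with hI_def
  have hIpos : 0 < I := identric_pos ha hb
  have hlogI : Real.log I = (b * Real.log b - a * Real.log a) / (b - a) - 1 :=
    identric_log ha hb (ne_of_lt hab')
  have hba : (0 : ℝ) < b - a := by linarith
  have huIcc : uIcc a b = Icc a b := uIcc_of_le hab'.le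
  have hpos : ∀ t ∈ Icc a b, (0 : ℝ) < t := fun t ht => lt_of_lt_of_le ha ht.1
  -- FTC
  have hderiv : ∀ t ∈ uIcc a b, HasDerivAt (polygamma (n - 1)) (polygamma n t) t := by
    intro t ht
    rw [huIcc] at ht
    have := hasDerivAt_polygamma (n - 1) (hpos t ht)
    rwa [show n - 1 + 1 = n by omega] at this
  have hcont : ContinuousOn (polygamma n) (uIcc a b) := by
    intro t ht
    rw [huIcc] at ht
    exact ((hasDerivAt_polygamma n (hpos t ht)).continuousAt).continuousWithinAt
  have hint : IntervalIntegrable (polygamma n) MeasureTheory.volume a b :=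
    hcont.intervalIntegrable
  have hFTC : ∫ t in a..b, polygamma n t = polygamma (n - 1) b - polygamma (n - 1) a :=
    intervalIntegral.integral_eq_sub_of_hasDerivAt hderiv hint
  -- pointwise bound
  set K := (Nat.factorial n : ℝ) * (((n : ℝ) + 1) * I * Spow (n + 2) I) with hK_def
  have hsign : ∀ t : ℝ, 0 < t →
      (-1 : ℝ) ^ n * polygamma n t = -((Nat.factorial n : ℝ) * Spow (n + 1) t) := by
    intro t ht
    rw [polygamma_eq hn ht, Pm]
    have : (-1 : ℝ) ^ n * (-1 : ℝ) ^ (n + 1) = -1 := by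
      rw [← pow_add, show n + (n + 1) = 2 * n + 1 by ring, pow_succ, pow_mul]
      norm_num
    calc (-1:ℝ) ^ n * ((-1:ℝ) ^ (n+1) * (Nat.factorial n : ℝ) * Spow (n+1) t)
        = ((-1:ℝ) ^ n * (-1:ℝ) ^ (n+1)) * ((Nat.factorial n : ℝ) * Spow (n+1) t) := by ring
      _ = -((Nat.factorial n : ℝ) * Spow (n + 1) t) := by rw [this]; ring
  have hpoint : ∀ t ∈ Icc a b,
      (-1 : ℝ) ^ n * polygamma n t ≤
        (-1 : ℝ) ^ n * polygamma n I + K * (Real.log t - Real.log I) := by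
    intro t ht
    have ht0 := hpos t ht
    rw [hsign t ht0, hsign I hIpos]
    have htan := tangent_bound hn hIpos ht0
    have := mul_le_mul_of_nonneg_left htan (Nat.cast_nonneg (α := ℝ) (Nat.factorial n))
    calc -((Nat.factorial n : ℝ) * Spow (n + 1) t)
        = (Nat.factorial n : ℝ) * (-Spow (n + 1) t) := by ring
      _ ≤ (Nat.factorial n : ℝ) * (-Spow (n + 1) I
            + ((n : ℝ) + 1) * I * Spow (n + 2) I * (Real.log t - Real.log I)) := this
      _ = -((Nat.factorial n : ℝ) * Spow (n + 1) I) + K * (Real.log t - Real.log I) := by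
          rw [hK_def]; ring
  -- integrate
  have hlogcont : ContinuousOn (fun t : ℝ => (-1 : ℝ) ^ n * polygamma n I
      + K * (Real.log t - Real.log I)) (uIcc a b) := by
    apply ContinuousOn.add continuousOn_const
    apply ContinuousOn.mul continuousOn_const
    apply ContinuousOn.sub ?_ continuousOn_const
    apply Real.continuousOn_log.mono
    intro t ht
    rw [huIcc] at ht
    exact ne_of_gt (hpos t ht)
  have hint2 : IntervalIntegrable (fun t : ℝ => (-1 : ℝ) ^ n * polygamma n I
      + K * (Real.log t - Real.log I)) MeasureTheory.volume a b := hlogcont.intervalIntegrable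
  have hint1 : IntervalIntegrable (fun t : ℝ => (-1 : ℝ) ^ n * polygamma n t)
      MeasureTheory.volume a b := hint.const_mul _
  have hmono := intervalIntegral.integral_mono_on hab'.le hint1 hint2 hpoint
  -- compute RHS integral
  have hlogint : IntervalIntegrable (fun t : ℝ => Real.log t - Real.log I)
      MeasureTheory.volume a b := by
    apply ContinuousOn.intervalIntegrable
    apply ContinuousOn.sub ?_ continuousOn_const
    apply Real.continuousOn_log.mono
    intro t ht
    rw [huIcc] at ht
    exact ne_of_gt (hpos t ht)
  have hnotmem : (0 : ℝ) ∉ uIcc a b := by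
    rw [huIcc]
    intro h
    exact absurd (hpos 0 h) (lt_irrefl 0)
  have hloggood : IntervalIntegrable Real.log MeasureTheory.volume a b := by
    apply ContinuousOn.intervalIntegrable
    apply Real.continuousOn_log.mono
    intro t ht
    rw [huIcc] at ht
    exact ne_of_gt (hpos t ht)
  have hcalc : (∫ t in a..b, ((-1 : ℝ) ^ n * polygamma n I + K * (Real.log t - Real.log I)))
      = (b - a) * ((-1 : ℝ) ^ n * polygamma n I) := by
    rw [intervalIntegral.integral_add (intervalIntegrable_const (μ := MeasureTheory.volume))
      (hlogint.const_mul K)]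
    have e2 : (∫ t in a..b, K * (Real.log t - Real.log I)) = 0 := by
      rw [intervalIntegral.integral_const_mul,
        intervalIntegral.integral_sub hloggood (intervalIntegrable_const (μ := MeasureTheory.volume)),
        integral_log, intervalIntegral.integral_const, smul_eq_mul]
      have h8 : (b - a) * Real.log I = b * Real.log b - a * Real.log a - b + a := by
        rw [hlogI]
        field_simp
        ring
      rw [h8]
      ring
    rw [e2, intervalIntegral.integral_const, smul_eq_mul, add_zero]
  -- combine
  have hLHS : (-1 : ℝ) ^ n * ((polygamma (n - 1) a - polygamma (n - 1) b) / (a - b))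
      = (∫ t in a..b, (-1 : ℝ) ^ n * polygamma n t) / (b - a) := by
    rw [intervalIntegral.integral_const_mul, hFTC]
    have hane : a - b ≠ 0 := by linarith
    have hbane : b - a ≠ 0 := ne_of_gt hba
    field_simp
    ring
  rw [hLHS, div_le_iff₀ hba]
  calc (∫ t in a..b, (-1 : ℝ) ^ n * polygamma n t)
      ≤ (∫ t in a..b, ((-1 : ℝ) ^ n * polygamma n I + K * (Real.log t - Real.log I))) := hmono
    _ = (b - a) * ((-1 : ℝ) ^ n * polygamma n I) := hcalc
    _ = (-1 : ℝ) ^ n * polygamma n I * (b - a) := by ring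

theorem stmt_17 (a b : ℝ) (ha : 0 < a) (hb : 0 < b) (hab : a ≠ b) (n : ℕ) (hn : 1 ≤ n) :
    (-1 : ℝ) ^ n * ((polygamma (n - 1) a - polygamma (n - 1) b) / (a - b)) ≤
      (-1 : ℝ) ^ n * polygamma n ((1 / Real.exp 1) * (b ^ b / a ^ a) ^ (1 / (b - a))) := by
  rcases lt_or_gt_of_ne hab with h | h
  · exact main_aux ha h hn
  · have key := main_aux hb h hn
    have hane : a - b ≠ 0 := sub_ne_zero.2 hab
    have hbane : b - a ≠ 0 := sub_ne_zero.2 (Ne.symm hab)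
    have e1 : (polygamma (n - 1) a - polygamma (n - 1) b) / (a - b)
        = (polygamma (n - 1) b - polygamma (n - 1) a) / (b - a) := by
      field_simp
      ring
    have e2 : (1 / Real.exp 1) * (b ^ b / a ^ a) ^ (1 / (b - a))
        = (1 / Real.exp 1) * (a ^ a / b ^ b) ^ (1 / (a - b)) := by
      congr 1
      have hpos : (0 : ℝ) < a ^ a / b ^ b :=
        div_pos (Real.rpow_pos_of_pos ha a) (Real.rpow_pos_of_pos hb b)
      have h1 : (b : ℝ) ^ b / a ^ a = (a ^ a / b ^ b)⁻¹ := by rw [inv_div]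
      have h2 : 1 / (b - a) = -(1 / (a - b)) := by
        rw [show b - a = -(a - b) by ring, div_neg]
      rw [h1, h2, Real.rpow_neg (inv_nonneg.2 hpos.le), Real.inv_rpow hpos.le, inv_inv]
    rw [e1, e2]
    exact key
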